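/- Let \kappa > 0, \alpha = 1/\sqrt{\kappa}, \alpha_- = -2/\sqrt{\kappa}, and define h(z_1,\ldots,z_N; w_1,\ldots,w_L) = \prod_{I<J}(z_J-z_I)^{2/\kappa} \prod_{R<S}(w_S-w_R)^{8/\kappa} \prod_{I,R}(z_I-w_R)^{-4/\kappa}. Then for each I, the differential operator D_I = \frac{\kappa}{2}\partial_{z_I}^2 + \sum_{J\ne I}(\frac{2}{z_J-z_I}\partial_{z_J} + \frac{(\kappa-6)/\kappa}{(z_J-z_I)^2}) applied to h, plus the screening-variable terms, yields a total derivative: D_I h + \sum_R (\frac{2}{w_R - z_I}\partial_{w_R} - \frac{2}{(w_R-z_I)^2}) h = 0; equivalently D_I h = -2\sum_R \partial_{w_R}(h/(w_R - z_I)). -/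

import Mathlib

open scoped BigOperators

/-- The screened Coulomb gas integrand for multiple SLEs:
`h(z₁,…,z_N; w₁,…,w_L) = ∏_{I<J}(z_J-z_I)^(2/κ) ∏_{R<S}(w_S-w_R)^(8/κ)
∏_{I,R}(z_I-w_R)^(-4/κ)`. -/
noncomputable def multSLEh (κ : ℝ) {N L : ℕ} (z : Fin N → ℝ) (w : Fin L → ℝ) : ℝ :=
  (∏ p ∈ Finset.univ.filter (fun p : Fin N × Fin N => p.1 < p.2),
      (z p.2 - z p.1) ^ (2 / κ)) *
    (∏ p ∈ Finset.univ.filter (fun p : Fin L × Fin L => p.1 < p.2),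
      (w p.2 - w p.1) ^ (8 / κ)) *
    ∏ I, ∏ R, (z I - w R) ^ (-(4 / κ))

/-- The operator `D_I = (κ/2)∂_{z_I}² + ∑_{J≠I}(2/(z_J-z_I)∂_{z_J} + ((κ-6)/κ)/(z_J-z_I)²)`
applied to `h`, plus the screening-variable terms, vanishes:
`D_I h + ∑_R (2/(w_R-z_I)∂_{w_R} - 2/(w_R-z_I)²) h = 0`; equivalently
`D_I h = -2∑_R ∂_{w_R}(h/(w_R - z_I))`. -/

lemma mylogDeriv_prod {ι : Type*} [DecidableEq ι] (s : Finset ι) (F : ι → ℝ → ℝ) (q : ι → ℝ)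
    (t : ℝ) (h : ∀ k ∈ s, HasDerivAt (F k) (F k t * q k) t) :
    HasDerivAt (fun t => ∏ k ∈ s, F k t) ((∏ k ∈ s, F k t) * ∑ k ∈ s, q k) t := by
  have := HasDerivAt.fun_finsetProd h
  refine this.congr_deriv (Eq.symm ?_)
  rw [Finset.mul_sum]
  refine Finset.sum_congr rfl fun k hk => ?_
  rw [smul_eq_mul, ← mul_assoc, Finset.prod_erase_mul _ _ hk]

lemma mylogDeriv_mul {f g : ℝ → ℝ} {p q t : ℝ}
    (hf : HasDerivAt f (f t * p) t) (hg : HasDerivAt g (g t * q) t) :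
    HasDerivAt (fun t => f t * g t) ((f t * g t) * (p + q)) t := by
  refine (hf.mul hg).congr_deriv ?_; ring

lemma hasDerivAt_sub_rpow (c a t : ℝ) (h : 0 < t - c) :
    HasDerivAt (fun t => (t - c) ^ a) ((t - c) ^ a * (a / (t - c))) t := by
  have h1 : HasDerivAt (fun t : ℝ => t - c) 1 t := (hasDerivAt_id t).sub_const c
  have h2 := (Real.hasDerivAt_rpow_const (p := a) (Or.inl h.ne')).comp t h1
  refine h2.congr_deriv (Eq.symm ?_)
  rw [Real.rpow_sub_one h.ne']
  field_simp

lemma hasDerivAt_rpow_sub (c a t : ℝ) (h : 0 < c - t) :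
    HasDerivAt (fun t => (c - t) ^ a) ((c - t) ^ a * (a / (t - c))) t := by
  have h1 : HasDerivAt (fun t : ℝ => c - t) (-1) t := (hasDerivAt_id t).const_sub c
  have h2 := (Real.hasDerivAt_rpow_const (p := a) (Or.inl h.ne')).comp t h1
  refine h2.congr_deriv (Eq.symm ?_)
  rw [Real.rpow_sub_one h.ne']
  have hct : c - t ≠ 0 := h.ne'
  have htc : t - c ≠ 0 := by intro hh; apply hct; linarith [sub_eq_zero.mp hh]
  field_simp; ring

lemma my_pair_sum {n : ℕ} (J : Fin n) (f : Fin n → ℝ) :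
    ∑ p ∈ Finset.univ.filter (fun p : Fin n × Fin n => p.1 < p.2),
      (if p.1 = J then f p.2 else if p.2 = J then f p.1 else 0)
    = ∑ K ∈ Finset.univ.erase J, f K := by
  rw [Finset.sum_filter, ← Finset.univ_product_univ, Finset.sum_product]
  have lhs : ∀ x : Fin n, (∑ y : Fin n, if x < y then
      (if x = J then f y else if y = J then f x else 0) else 0)
      = (if x = J then ∑ y : Fin n, (if J < y then f y else 0) else 0)
        + (if x < J then f x else 0) := by
    intro x
    by_cases hx : x = J
    · subst hx
      rw [if_pos rfl, if_neg (lt_irrefl x), add_zero]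
      refine Finset.sum_congr rfl fun y _ => ?_
      by_cases h : x < y <;> simp [h]
    · rw [if_neg hx, zero_add]
      have : ∀ y : Fin n, (if x < y then (if x = J then f y else if y = J then f x else 0) else 0)
          = if y = J then (if x < J then f x else 0) else 0 := by
        intro y
        by_cases hy : y = J
        · subst hy
          by_cases hxy : x < y
          · simp [hxy, hx]
          · simp [hxy]
        · by_cases hxy : x < y <;> simp [hxy, hx, hy]
      rw [Finset.sum_congr rfl fun y _ => this y, Finset.sum_ite_eq' Finset.univ J
        (fun _ => if x < J then f x else 0), if_pos (Finset.mem_univ J)]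
  rw [Finset.sum_congr rfl fun x _ => lhs x, Finset.sum_add_distrib,
    Finset.sum_ite_eq' Finset.univ J, if_pos (Finset.mem_univ J)]
  have : ∑ K ∈ Finset.univ.erase J, f K = ∑ K : Fin n, if K = J then 0 else f K := by
    rw [← Finset.sum_erase Finset.univ (f := fun K => if K = J then 0 else f K) (if_pos rfl)]
    exact Finset.sum_congr rfl fun K hK => by rw [if_neg (Finset.ne_of_mem_erase hK)]
  rw [this, ← Finset.sum_add_distrib]
  refine Finset.sum_congr rfl fun K _ => ?_
  rcases lt_trichotomy K J with h | h | h
  · simp [h, ne_of_lt h, not_lt.mpr h.le]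
  · simp [h]
  · simp [h, (ne_of_gt h), not_lt.mpr h.le, lt_irrefl]

lemma zUpdateDeriv (κ : ℝ) {N L : ℕ} (z : Fin N → ℝ) (w : Fin L → ℝ) (J : Fin N) (t : ℝ)
    (h1 : ∀ K, K < J → z K < t) (h2 : ∀ K, J < K → t < z K) (h3 : ∀ R, w R < t) :
    HasDerivAt (fun t => multSLEh κ (Function.update z J t) w)
      (multSLEh κ (Function.update z J t) w *
        ((2 / κ) * ∑ K ∈ Finset.univ.erase J, (t - z K)⁻¹
          - (4 / κ) * ∑ R, (t - w R)⁻¹)) t := by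
  classical
  set SN := Finset.univ.filter (fun p : Fin N × Fin N => p.1 < p.2) with hSN
  set SL := Finset.univ.filter (fun p : Fin L × Fin L => p.1 < p.2) with hSL
  -- factor 1
  have d1 : HasDerivAt
      (fun t => ∏ p ∈ SN, (Function.update z J t p.2 - Function.update z J t p.1) ^ (2 / κ))
      ((∏ p ∈ SN, (Function.update z J t p.2 - Function.update z J t p.1) ^ (2 / κ)) *
        ∑ p ∈ SN, (if p.1 = J then (2 / κ) / (t - z p.2)
          else if p.2 = J then (2 / κ) / (t - z p.1) else 0)) t := by
    refine mylogDeriv_prod SN _ _ t fun p hp => ?_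
    have hlt : p.1 < p.2 := (Finset.mem_filter.mp hp).2
    by_cases e1 : p.1 = J
    · have e2 : p.2 ≠ J := fun h => absurd hlt (by rw [e1, h] at hlt ⊢; exact lt_irrefl _)
      simp only [Function.update_apply, e1, if_pos rfl, if_neg e2]
      exact hasDerivAt_rpow_sub (z p.2) (2 / κ) t
        (by have := h2 p.2 (e1 ▸ hlt); linarith)
    · by_cases e2 : p.2 = J
      · simp only [Function.update_apply, e2, if_pos rfl, if_neg e1]
        exact hasDerivAt_sub_rpow (z p.1) (2 / κ) t
          (by have := h1 p.1 (e2 ▸ hlt); linarith)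
      · simp only [Function.update_apply, if_neg e1, if_neg e2]
        simpa using (hasDerivAt_const t ((z p.2 - z p.1) ^ (2 / κ)))
  -- factor 2 (constant)
  have d2 : HasDerivAt (fun _ : ℝ => ∏ p ∈ SL, (w p.2 - w p.1) ^ (8 / κ))
      ((∏ p ∈ SL, (w p.2 - w p.1) ^ (8 / κ)) * 0) t := by
    simpa using hasDerivAt_const t (∏ p ∈ SL, (w p.2 - w p.1) ^ (8 / κ))
  -- factor 3
  have d3 : HasDerivAt
      (fun t => ∏ i, ∏ R, (Function.update z J t i - w R) ^ (-(4 / κ)))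
      ((∏ i, ∏ R, (Function.update z J t i - w R) ^ (-(4 / κ))) *
        ∑ i : Fin N, (if i = J then ∑ R, (-(4 / κ)) / (t - w R) else 0)) t := by
    refine mylogDeriv_prod Finset.univ _ _ t fun i _ => ?_
    by_cases e : i = J
    · simp only [Function.update_apply, e, if_pos rfl]
      refine mylogDeriv_prod Finset.univ _ (fun R => (-(4 / κ)) / (t - w R)) t fun R _ => ?_
      exact hasDerivAt_sub_rpow (w R) (-(4 / κ)) t (by have := h3 R; linarith)
    · simp only [Function.update_apply, if_neg e]
      simpa using hasDerivAt_const t (∏ R, (z i - w R) ^ (-(4 / κ)))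
  have D := mylogDeriv_mul (mylogDeriv_mul d1 d2) d3
  refine D.congr_deriv (Eq.symm ?_)
  have hq1 : ∑ p ∈ SN, (if p.1 = J then (2 / κ) / (t - z p.2)
      else if p.2 = J then (2 / κ) / (t - z p.1) else 0)
      = (2 / κ) * ∑ K ∈ Finset.univ.erase J, (t - z K)⁻¹ := by
    have hps := my_pair_sum J (fun K => (2 / κ) / (t - z K))
    rw [hSN, hps, Finset.mul_sum]
    exact Finset.sum_congr rfl fun K _ => (div_eq_mul_inv _ _)
  have hq3 : ∑ i : Fin N, (if i = J then ∑ R, (-(4 / κ)) / (t - w R) else 0)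
      = -((4 / κ) * ∑ R, (t - w R)⁻¹) := by
    rw [Finset.sum_ite_eq' Finset.univ J, if_pos (Finset.mem_univ J), Finset.mul_sum,
      ← Finset.sum_neg_distrib]
    exact Finset.sum_congr rfl fun R _ => by rw [div_eq_mul_inv]; ring
  rw [hq1, hq3]
  show multSLEh κ (Function.update z J t) w * _ = _
  rw [multSLEh]
  ring

lemma wUpdateDeriv (κ : ℝ) {N L : ℕ} (z : Fin N → ℝ) (w : Fin L → ℝ) (R : Fin L) (t : ℝ)
    (h1 : ∀ S, S < R → w S < t) (h2 : ∀ S, R < S → t < w S) (h3 : ∀ i, t < z i) :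
    HasDerivAt (fun t => multSLEh κ z (Function.update w R t))
      (multSLEh κ z (Function.update w R t) *
        ((8 / κ) * ∑ S ∈ Finset.univ.erase R, (t - w S)⁻¹
          - (4 / κ) * ∑ i, (t - z i)⁻¹)) t := by
  set SN := Finset.univ.filter (fun p : Fin N × Fin N => p.1 < p.2) with hSN
  set SL := Finset.univ.filter (fun p : Fin L × Fin L => p.1 < p.2) with hSL
  have d1 : HasDerivAt (fun _ : ℝ => ∏ p ∈ SN, (z p.2 - z p.1) ^ (2 / κ))
      ((∏ p ∈ SN, (z p.2 - z p.1) ^ (2 / κ)) * 0) t := by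
    simpa using hasDerivAt_const t (∏ p ∈ SN, (z p.2 - z p.1) ^ (2 / κ))
  have d2 : HasDerivAt
      (fun t => ∏ p ∈ SL, (Function.update w R t p.2 - Function.update w R t p.1) ^ (8 / κ))
      ((∏ p ∈ SL, (Function.update w R t p.2 - Function.update w R t p.1) ^ (8 / κ)) *
        ∑ p ∈ SL, (if p.1 = R then (8 / κ) / (t - w p.2)
          else if p.2 = R then (8 / κ) / (t - w p.1) else 0)) t := by
    refine mylogDeriv_prod SL _ _ t fun p hp => ?_
    have hlt : p.1 < p.2 := (Finset.mem_filter.mp hp).2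
    by_cases e1 : p.1 = R
    · have e2 : p.2 ≠ R := fun h => absurd hlt (by rw [e1, h] at hlt ⊢; exact lt_irrefl _)
      simp only [Function.update_apply, e1, if_pos rfl, if_neg e2]
      exact hasDerivAt_rpow_sub (w p.2) (8 / κ) t (by have := h2 p.2 (e1 ▸ hlt); linarith)
    · by_cases e2 : p.2 = R
      · simp only [Function.update_apply, e2, if_pos rfl, if_neg e1]
        exact hasDerivAt_sub_rpow (w p.1) (8 / κ) t (by have := h1 p.1 (e2 ▸ hlt); linarith)
      · simp only [Function.update_apply, if_neg e1, if_neg e2]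
        simpa using (hasDerivAt_const t ((w p.2 - w p.1) ^ (8 / κ)))
  have d3 : HasDerivAt
      (fun t => ∏ i, ∏ r, (z i - Function.update w R t r) ^ (-(4 / κ)))
      ((∏ i, ∏ r, (z i - Function.update w R t r) ^ (-(4 / κ))) *
        ∑ i : Fin N, (-(4 / κ)) / (t - z i)) t := by
    refine mylogDeriv_prod Finset.univ _ (fun i => (-(4 / κ)) / (t - z i)) t fun i _ => ?_
    have inner := mylogDeriv_prod Finset.univ
      (fun r t' => (z i - Function.update w R t' r) ^ (-(4 / κ)))
      (fun r => if r = R then (-(4 / κ)) / (t - z i) else 0) t (fun r _ => ?_)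
    · convert inner using 2
      rw [Finset.sum_ite_eq' Finset.univ R, if_pos (Finset.mem_univ R)]
    · by_cases e : r = R
      · simp only [Function.update_apply, e, if_pos rfl]
        exact hasDerivAt_rpow_sub (z i) (-(4 / κ)) t (by have := h3 i; linarith)
      · simp only [Function.update_apply, if_neg e]
        simpa using hasDerivAt_const t ((z i - w r) ^ (-(4 / κ)))
  have D := mylogDeriv_mul (mylogDeriv_mul d1 d2) d3
  refine D.congr_deriv (Eq.symm ?_)
  have hps := my_pair_sum R (fun S => (8 / κ) / (t - w S))
  have hq2 : ∑ p ∈ SL, (if p.1 = R then (8 / κ) / (t - w p.2)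
      else if p.2 = R then (8 / κ) / (t - w p.1) else 0)
      = (8 / κ) * ∑ S ∈ Finset.univ.erase R, (t - w S)⁻¹ := by
    rw [hSL, hps, Finset.mul_sum]
    exact Finset.sum_congr rfl fun K _ => (div_eq_mul_inv _ _)
  have hq3 : ∑ i : Fin N, (-(4 / κ)) / (t - z i) = -((4 / κ) * ∑ i, (t - z i)⁻¹) := by
    rw [Finset.mul_sum, ← Finset.sum_neg_distrib]
    exact Finset.sum_congr rfl fun i _ => by rw [div_eq_mul_inv]; ring
  rw [hq2, hq3]
  show multSLEh κ z (Function.update w R t) * _ = _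
  rw [multSLEh]
  ring

lemma zSecondDeriv (κ : ℝ) {N L : ℕ} (z : Fin N → ℝ) (w : Fin L → ℝ) (I : Fin N)
    (hz : ∀ i j : Fin N, i < j → 0 < z j - z i)
    (hzw : ∀ (i : Fin N) (r : Fin L), 0 < z i - w r) :
    deriv (deriv fun t : ℝ => multSLEh κ (Function.update z I t) w) (z I)
      = multSLEh κ z w *
        (((2 / κ) * ∑ K ∈ Finset.univ.erase I, (z I - z K)⁻¹
            - (4 / κ) * ∑ R, (z I - w R)⁻¹) ^ 2
          + ((2 / κ) * ∑ K ∈ Finset.univ.erase I, (-1 / (z I - z K) ^ 2)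
            - (4 / κ) * ∑ R, (-1 / (z I - w R) ^ 2))) := by
  set F := fun t : ℝ => multSLEh κ (Function.update z I t) w with hF
  set A := fun t : ℝ => (2 / κ) * ∑ K ∈ Finset.univ.erase I, (t - z K)⁻¹
      - (4 / κ) * ∑ R, (t - w R)⁻¹ with hA
  have ev : ∀ᶠ t in nhds (z I), (∀ K, K < I → z K < t) ∧ (∀ K, I < K → t < z K)
      ∧ (∀ R, w R < t) := by
    refine Filter.Eventually.and ?_ (Filter.Eventually.and ?_ ?_)
    · rw [Filter.eventually_all]
      intro K
      by_cases hK : K < I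
      · exact (eventually_gt_nhds (by linarith [hz K I hK])).mono fun t h _ => h
      · exact Filter.Eventually.of_forall fun t h' => absurd h' hK
    · rw [Filter.eventually_all]
      intro K
      by_cases hK : I < K
      · exact (eventually_lt_nhds (by linarith [hz I K hK])).mono fun t h _ => h
      · exact Filter.Eventually.of_forall fun t h' => absurd h' hK
    · rw [Filter.eventually_all]
      intro R
      exact eventually_gt_nhds (by linarith [hzw I R])
  have hdF : deriv F =ᶠ[nhds (z I)] fun t => F t * A t :=
    ev.mono fun t ht => (zUpdateDeriv κ z w I t ht.1 ht.2.1 ht.2.2).deriv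
  have step : deriv (deriv F) (z I) = deriv (fun t => F t * A t) (z I) := hdF.deriv_eq
  have hzi : ∀ K ∈ Finset.univ.erase I, HasDerivAt (fun t : ℝ => (t - z K)⁻¹)
      (-1 / (z I - z K) ^ 2) (z I) := by
    intro K hK
    have hKI : K ≠ I := Finset.ne_of_mem_erase hK
    have hne : z I - z K ≠ 0 := by
      rcases hKI.lt_or_gt with h | h
      · have := hz K I h; intro hc; rw [hc] at this; exact lt_irrefl 0 this
      · have := hz I K h; intro hc; nlinarith
    simpa using ((hasDerivAt_id (z I)).sub_const (z K)).fun_inv hne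
  have hwi : ∀ R : Fin L, HasDerivAt (fun t : ℝ => (t - w R)⁻¹)
      (-1 / (z I - w R) ^ 2) (z I) := by
    intro R
    simpa using ((hasDerivAt_id (z I)).sub_const (w R)).fun_inv (hzw I R).ne'
  have hA' : HasDerivAt A ((2 / κ) * ∑ K ∈ Finset.univ.erase I, (-1 / (z I - z K) ^ 2)
      - (4 / κ) * ∑ R, (-1 / (z I - w R) ^ 2)) (z I) := by
    exact ((HasDerivAt.fun_sum hzi).const_mul _).sub ((HasDerivAt.fun_sum fun R _ => hwi R).const_mul _)
  have hF0 : HasDerivAt F (F (z I) * A (z I)) (z I) := by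
    have := zUpdateDeriv κ z w I (z I) (fun K hK => by linarith [hz K I hK])
      (fun K hK => by linarith [hz I K hK]) (fun R => by linarith [hzw I R])
    simpa [hF, hA] using this
  have hmul : HasDerivAt (fun t => F t * A t)
      (F (z I) * A (z I) * A (z I) + F (z I) *
        ((2 / κ) * ∑ K ∈ Finset.univ.erase I, (-1 / (z I - z K) ^ 2)
          - (4 / κ) * ∑ R, (-1 / (z I - w R) ^ 2))) (z I) := hF0.mul hA'
  rw [step, hmul.deriv]
  have hFz : F (z I) = multSLEh κ z w := by rw [hF]; simp [Function.update_eq_self]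
  have hAz : A (z I) = (2 / κ) * ∑ K ∈ Finset.univ.erase I, (z I - z K)⁻¹
      - (4 / κ) * ∑ R, (z I - w R)⁻¹ := rfl
  rw [hFz, hAz]
  ring

lemma my_sym_pair {ι : Type*} [DecidableEq ι] (s : Finset ι) (f : ι → ι → ℝ) (g : ι → ℝ)
    (hf : ∀ i ∈ s, ∀ j ∈ s, i ≠ j → f i j + f j i = -(g i * g j)) :
    2 * (∑ i ∈ s, ∑ j ∈ s.erase i, f i j)
      = (∑ i ∈ s, g i ^ 2) - (∑ i ∈ s, g i) ^ 2 := by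
  have conv : ∀ F : ι → ι → ℝ, (∑ i ∈ s, ∑ j ∈ s.erase i, F i j)
      = ∑ i ∈ s, ∑ j ∈ s, (if j = i then 0 else F i j) := by
    intro F
    refine Finset.sum_congr rfl fun i _ => ?_
    rw [← Finset.sum_erase s (f := fun j => if j = i then 0 else F i j) (if_pos rfl)]
    exact Finset.sum_congr rfl fun j hj => (if_neg (Finset.ne_of_mem_erase hj)).symm
  have swap : (∑ i ∈ s, ∑ j ∈ s.erase i, f i j)
      = ∑ i ∈ s, ∑ j ∈ s, (if i = j then 0 else f j i) := by
    rw [conv, Finset.sum_comm]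
  have key : 2 * (∑ i ∈ s, ∑ j ∈ s.erase i, f i j)
      = ∑ i ∈ s, ∑ j ∈ s, (if j = i then 0 else -(g i * g j)) := by
    rw [two_mul]
    nth_rewrite 1 [conv]
    rw [swap, ← Finset.sum_add_distrib]
    refine Finset.sum_congr rfl fun i hi => ?_
    rw [← Finset.sum_add_distrib]
    refine Finset.sum_congr rfl fun j hj => ?_
    by_cases h : j = i
    · subst h; simp
    · rw [if_neg h, if_neg (Ne.symm h), if_neg h]
      exact hf i hi j hj (Ne.symm h)
  rw [key]
  have rowval : ∀ i ∈ s, (∑ j ∈ s, (if j = i then 0 else -(g i * g j)))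
      = g i ^ 2 - g i * ∑ j ∈ s, g j := by
    intro i hi
    have : (∑ j ∈ s, (if j = i then 0 else -(g i * g j)))
        = ∑ j ∈ s, (-(g i * g j) + (if j = i then g i * g j else 0)) := by
      refine Finset.sum_congr rfl fun j _ => ?_
      by_cases h : j = i
      · subst h; simp
      · simp [h]
    rw [this, Finset.sum_add_distrib, Finset.sum_ite_eq' s i, if_pos hi,
      Finset.sum_neg_distrib, ← Finset.mul_sum]
    ring
  rw [Finset.sum_congr rfl rowval, Finset.sum_sub_distrib, ← Finset.sum_mul]
  ring

lemma my_sym_mixed {ι ι' : Type*} (s : Finset ι) (t : Finset ι')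
    (f : ι → ι' → ℝ) (f' : ι' → ι → ℝ) (g : ι → ℝ) (g' : ι' → ℝ)
    (hf : ∀ i ∈ s, ∀ r ∈ t, f i r + f' r i = -(g i * g' r)) :
    (∑ i ∈ s, ∑ r ∈ t, f i r) + (∑ r ∈ t, ∑ i ∈ s, f' r i)
      = -((∑ i ∈ s, g i) * (∑ r ∈ t, g' r)) := by
  rw [Finset.sum_comm (s := t) (t := s) (f := fun r i => f' r i), ← Finset.sum_add_distrib]
  have : ∀ i ∈ s, ((∑ r ∈ t, f i r) + ∑ r ∈ t, f' r i) = ∑ r ∈ t, -(g i * g' r) := by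
    intro i hi
    rw [← Finset.sum_add_distrib]
    exact Finset.sum_congr rfl fun r hr => hf i hi r hr
  rw [Finset.sum_congr rfl this, Finset.sum_mul_sum, ← Finset.sum_neg_distrib]
  exact Finset.sum_congr rfl fun i _ => Finset.sum_neg_distrib _

lemma my_triple_id (c x y : ℝ) (hxy : x ≠ y) (hx : x ≠ c) (hy : y ≠ c) :
    (x - c)⁻¹ * (x - y)⁻¹ + (y - c)⁻¹ * (y - x)⁻¹ = -((x - c)⁻¹ * (y - c)⁻¹) := by
  have h1 : x - y ≠ 0 := sub_ne_zero.mpr hxy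
  have h2 : y - x ≠ 0 := sub_ne_zero.mpr (Ne.symm hxy)
  have h3 : x - c ≠ 0 := sub_ne_zero.mpr hx
  have h4 : y - c ≠ 0 := sub_ne_zero.mpr hy
  field_simp
  ring

/-- The operator `D_I = (κ/2)∂_{z_I}² + ∑_{J≠I}(2/(z_J-z_I)∂_{z_J} + ((κ-6)/κ)/(z_J-z_I)²)`
applied to `h`, plus the screening-variable terms, vanishes. -/
theorem multiple_sle_null_field (κ : ℝ) (hκ : 0 < κ) {N L : ℕ}
    (z : Fin N → ℝ) (w : Fin L → ℝ) (I : Fin N)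
    (hz : ∀ i j : Fin N, i < j → 0 < z j - z i)
    (hw : ∀ r s : Fin L, r < s → 0 < w s - w r)
    (hzw : ∀ (i : Fin N) (r : Fin L), 0 < z i - w r) :
    (κ / 2 * deriv (deriv fun t : ℝ => multSLEh κ (Function.update z I t) w) (z I)
        + (∑ J ∈ Finset.univ.erase I,
            (2 / (z J - z I) * deriv (fun t : ℝ => multSLEh κ (Function.update z J t) w) (z J)
              + ((κ - 6) / κ) / (z J - z I) ^ 2 * multSLEh κ z w))
        + (∑ R, (2 / (w R - z I) * deriv (fun t : ℝ => multSLEh κ z (Function.update w R t)) (w R)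
              - 2 / (w R - z I) ^ 2 * multSLEh κ z w)) = 0)
    ∧ (κ / 2 * deriv (deriv fun t : ℝ => multSLEh κ (Function.update z I t) w) (z I)
        + (∑ J ∈ Finset.univ.erase I,
            (2 / (z J - z I) * deriv (fun t : ℝ => multSLEh κ (Function.update z J t) w) (z J)
              + ((κ - 6) / κ) / (z J - z I) ^ 2 * multSLEh κ z w))
      = -2 * ∑ R, deriv (fun t : ℝ => multSLEh κ z (Function.update w R t) / (t - z I)) (w R)) := by
  have hκ0 : κ ≠ 0 := hκ.ne'
  have hwz : ∀ (r : Fin L) (i : Fin N), w r < z i := fun r i => sub_pos.mp (hzw i r)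
  have hzz : ∀ i j : Fin N, i ≠ j → z i ≠ z j := by
    intro i j hij
    rcases hij.lt_or_gt with h | h
    · exact (sub_pos.mp (hz i j h)).ne
    · exact (sub_pos.mp (hz j i h)).ne'
  have hww : ∀ r s : Fin L, r ≠ s → w r ≠ w s := by
    intro r s hrs
    rcases hrs.lt_or_gt with h | h
    · exact (sub_pos.mp (hw r s h)).ne
    · exact (sub_pos.mp (hw s r h)).ne'
  -- first derivatives
  have hBd : ∀ J : Fin N, deriv (fun t : ℝ => multSLEh κ (Function.update z J t) w) (z J)
      = multSLEh κ z w * ((2 / κ) * ∑ K ∈ Finset.univ.erase J, (z J - z K)⁻¹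
          - (4 / κ) * ∑ R, (z J - w R)⁻¹) := by
    intro J
    have hd := (zUpdateDeriv κ z w J (z J)
      (fun K hK => sub_pos.mp (hz K J hK))
      (fun K hK => sub_pos.mp (hz J K hK))
      (fun R => hwz R J)).deriv
    rw [Function.update_eq_self] at hd
    exact hd
  have hCd : ∀ R : Fin L, deriv (fun t : ℝ => multSLEh κ z (Function.update w R t)) (w R)
      = multSLEh κ z w * ((8 / κ) * ∑ S ∈ Finset.univ.erase R, (w R - w S)⁻¹
          - (4 / κ) * ∑ i, (w R - z i)⁻¹) := by
    intro R
    have hd := (wUpdateDeriv κ z w R (w R)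
      (fun S hS => sub_pos.mp (hw S R hS))
      (fun S hS => sub_pos.mp (hw R S hS))
      (fun i => hwz R i)).deriv
    rw [Function.update_eq_self] at hd
    exact hd
  -- second derivative, in ±u,v form
  have e1 : (∑ K ∈ Finset.univ.erase I, (z I - z K)⁻¹) = -(∑ K ∈ Finset.univ.erase I, (z K - z I)⁻¹) := by
    rw [← Finset.sum_neg_distrib]
    refine Finset.sum_congr rfl fun K _ => ?_
    rw [show z I - z K = -(z K - z I) by ring, inv_neg]
  have e2 : (∑ R, (z I - w R)⁻¹) = -(∑ R, (w R - z I)⁻¹) := by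
    rw [← Finset.sum_neg_distrib]
    refine Finset.sum_congr rfl fun R _ => ?_
    rw [show z I - w R = -(w R - z I) by ring, inv_neg]
  have e3 : (∑ K ∈ Finset.univ.erase I, (-1 / (z I - z K) ^ 2)) = -(∑ K ∈ Finset.univ.erase I, ((z K - z I)⁻¹) ^ 2) := by
    rw [← Finset.sum_neg_distrib]
    refine Finset.sum_congr rfl fun K _ => ?_
    rw [show (z I - z K) ^ 2 = (z K - z I) ^ 2 by ring, neg_div, one_div, ← inv_pow]
  have e4 : (∑ R, (-1 / (z I - w R) ^ 2)) = -(∑ R, ((w R - z I)⁻¹) ^ 2) := by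
    rw [← Finset.sum_neg_distrib]
    refine Finset.sum_congr rfl fun R _ => ?_
    rw [show (z I - w R) ^ 2 = (w R - z I) ^ 2 by ring, neg_div, one_div, ← inv_pow]
  have hDD : deriv (deriv fun t : ℝ => multSLEh κ (Function.update z I t) w) (z I)
      = multSLEh κ z w * (((2 / κ) * -(∑ K ∈ Finset.univ.erase I, (z K - z I)⁻¹) - (4 / κ) * -(∑ R, (w R - z I)⁻¹)) ^ 2
          + ((2 / κ) * -(∑ K ∈ Finset.univ.erase I, ((z K - z I)⁻¹) ^ 2) - (4 / κ) * -(∑ R, ((w R - z I)⁻¹) ^ 2))) := by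
    rw [zSecondDeriv κ z w I hz hzw, e1, e2, e3, e4]
  have cX : κ / 2 * (multSLEh κ z w * (((2 / κ) * -(∑ K ∈ Finset.univ.erase I, (z K - z I)⁻¹) - (4 / κ) * -(∑ R, (w R - z I)⁻¹)) ^ 2
        + ((2 / κ) * -(∑ K ∈ Finset.univ.erase I, ((z K - z I)⁻¹) ^ 2) - (4 / κ) * -(∑ R, ((w R - z I)⁻¹) ^ 2))))
      = multSLEh κ z w * ((2 / κ) * ((∑ K ∈ Finset.univ.erase I, (z K - z I)⁻¹) - 2 * (∑ R, (w R - z I)⁻¹)) ^ 2 + (-(∑ K ∈ Finset.univ.erase I, ((z K - z I)⁻¹) ^ 2) + 2 * (∑ R, ((w R - z I)⁻¹) ^ 2))) := by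
    field_simp
    ring
  -- the J-sum
  have hY : (∑ J ∈ Finset.univ.erase I,
        (2 / (z J - z I) * deriv (fun t : ℝ => multSLEh κ (Function.update z J t) w) (z J)
          + ((κ - 6) / κ) / (z J - z I) ^ 2 * multSLEh κ z w))
      = multSLEh κ z w * ((4 / κ) * (∑ K ∈ Finset.univ.erase I, ((z K - z I)⁻¹) ^ 2) + (4 / κ) * (∑ J ∈ Finset.univ.erase I, (z J - z I)⁻¹ * ∑ K ∈ (Finset.univ.erase I).erase J, (z J - z K)⁻¹) - (8 / κ) * (∑ J ∈ Finset.univ.erase I, (z J - z I)⁻¹ * ∑ R, (z J - w R)⁻¹) + (1 - 6 / κ) * (∑ K ∈ Finset.univ.erase I, ((z K - z I)⁻¹) ^ 2)) := by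
    have point : ∀ J ∈ Finset.univ.erase I,
        (2 / (z J - z I) * deriv (fun t : ℝ => multSLEh κ (Function.update z J t) w) (z J)
          + ((κ - 6) / κ) / (z J - z I) ^ 2 * multSLEh κ z w)
        = multSLEh κ z w * ((4 / κ) * ((z J - z I)⁻¹) ^ 2
            + (4 / κ) * ((z J - z I)⁻¹ * ∑ K ∈ (Finset.univ.erase I).erase J, (z J - z K)⁻¹)
            - (8 / κ) * ((z J - z I)⁻¹ * ∑ R, (z J - w R)⁻¹)
            + (1 - 6 / κ) * ((z J - z I)⁻¹) ^ 2) := by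
      intro J hJ
      have hJI : J ≠ I := Finset.ne_of_mem_erase hJ
      have hsplit : (∑ K ∈ Finset.univ.erase J, (z J - z K)⁻¹)
          = (z J - z I)⁻¹ + ∑ K ∈ (Finset.univ.erase I).erase J, (z J - z K)⁻¹ := by
        rw [← Finset.add_sum_erase _ _
          (Finset.mem_erase.mpr ⟨Ne.symm hJI, Finset.mem_univ I⟩), Finset.erase_right_comm]
      rw [hBd J, hsplit]
      have hx : z J - z I ≠ 0 := sub_ne_zero.mpr (hzz J I hJI)
      field_simp
      ring
    rw [Finset.sum_congr rfl point, ← Finset.mul_sum]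
    congr 1
    rw [Finset.sum_add_distrib, Finset.sum_sub_distrib, Finset.sum_add_distrib,
      ← Finset.mul_sum, ← Finset.mul_sum, ← Finset.mul_sum, ← Finset.mul_sum]
  -- the R-sum
  have hZ : (∑ R, (2 / (w R - z I) * deriv (fun t : ℝ => multSLEh κ z (Function.update w R t)) (w R)
          - 2 / (w R - z I) ^ 2 * multSLEh κ z w))
      = multSLEh κ z w * ((16 / κ) * (∑ R, (w R - z I)⁻¹ * ∑ S ∈ Finset.univ.erase R, (w R - w S)⁻¹) - (8 / κ) * (∑ R, ((w R - z I)⁻¹) ^ 2) - (8 / κ) * (∑ R, (w R - z I)⁻¹ * ∑ J ∈ Finset.univ.erase I, (w R - z J)⁻¹) - 2 * (∑ R, ((w R - z I)⁻¹) ^ 2)) := by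
    have point : ∀ R : Fin L, R ∈ (Finset.univ : Finset (Fin L)) →
        (2 / (w R - z I) * deriv (fun t : ℝ => multSLEh κ z (Function.update w R t)) (w R)
          - 2 / (w R - z I) ^ 2 * multSLEh κ z w)
        = multSLEh κ z w * ((16 / κ) * ((w R - z I)⁻¹ * ∑ S ∈ Finset.univ.erase R, (w R - w S)⁻¹)
            - (8 / κ) * ((w R - z I)⁻¹) ^ 2
            - (8 / κ) * ((w R - z I)⁻¹ * ∑ J ∈ Finset.univ.erase I, (w R - z J)⁻¹)
            - 2 * ((w R - z I)⁻¹) ^ 2) := by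
      intro R _
      have hsplit : (∑ i, (w R - z i)⁻¹)
          = (w R - z I)⁻¹ + ∑ i ∈ Finset.univ.erase I, (w R - z i)⁻¹ :=
        (Finset.add_sum_erase _ _ (Finset.mem_univ I)).symm
      rw [hCd R, hsplit]
      have hx : w R - z I ≠ 0 := sub_ne_zero.mpr (hwz R I).ne
      field_simp
      ring
    rw [Finset.sum_congr rfl point, ← Finset.mul_sum]
    congr 1
    rw [Finset.sum_sub_distrib, Finset.sum_sub_distrib, Finset.sum_sub_distrib,
      ← Finset.mul_sum, ← Finset.mul_sum, ← Finset.mul_sum, ← Finset.mul_sum]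
  -- symmetrization identities
  have F1d : 2 * (∑ J ∈ Finset.univ.erase I, ∑ K ∈ (Finset.univ.erase I).erase J, (z J - z I)⁻¹ * (z J - z K)⁻¹) = (∑ K ∈ Finset.univ.erase I, ((z K - z I)⁻¹) ^ 2) - (∑ K ∈ Finset.univ.erase I, (z K - z I)⁻¹) ^ 2 :=
    my_sym_pair (Finset.univ.erase I) (fun J K => (z J - z I)⁻¹ * (z J - z K)⁻¹)
      (fun K => (z K - z I)⁻¹)
      (fun i hi j hj hij => my_triple_id (z I) (z i) (z j) (hzz i j hij)
        (hzz i I (Finset.ne_of_mem_erase hi)) (hzz j I (Finset.ne_of_mem_erase hj)))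
  have F1 : 2 * (∑ J ∈ Finset.univ.erase I, (z J - z I)⁻¹ * ∑ K ∈ (Finset.univ.erase I).erase J, (z J - z K)⁻¹) = (∑ K ∈ Finset.univ.erase I, ((z K - z I)⁻¹) ^ 2) - (∑ K ∈ Finset.univ.erase I, (z K - z I)⁻¹) ^ 2 := by
    rw [show (∑ J ∈ Finset.univ.erase I, (z J - z I)⁻¹ * ∑ K ∈ (Finset.univ.erase I).erase J, (z J - z K)⁻¹) = (∑ J ∈ Finset.univ.erase I, ∑ K ∈ (Finset.univ.erase I).erase J, (z J - z I)⁻¹ * (z J - z K)⁻¹) from Finset.sum_congr rfl fun J _ => Finset.mul_sum _ _ _]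
    exact F1d
  have F2d : 2 * (∑ R, ∑ S ∈ Finset.univ.erase R, (w R - z I)⁻¹ * (w R - w S)⁻¹) = (∑ R, ((w R - z I)⁻¹) ^ 2) - (∑ R, (w R - z I)⁻¹) ^ 2 :=
    my_sym_pair Finset.univ (fun R S => (w R - z I)⁻¹ * (w R - w S)⁻¹)
      (fun R => (w R - z I)⁻¹)
      (fun r _ s _ hrs => my_triple_id (z I) (w r) (w s) (hww r s hrs)
        (hwz r I).ne (hwz s I).ne)
  have F2 : 2 * (∑ R, (w R - z I)⁻¹ * ∑ S ∈ Finset.univ.erase R, (w R - w S)⁻¹) = (∑ R, ((w R - z I)⁻¹) ^ 2) - (∑ R, (w R - z I)⁻¹) ^ 2 := by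
    rw [show (∑ R, (w R - z I)⁻¹ * ∑ S ∈ Finset.univ.erase R, (w R - w S)⁻¹) = (∑ R, ∑ S ∈ Finset.univ.erase R, (w R - z I)⁻¹ * (w R - w S)⁻¹) from Finset.sum_congr rfl fun R _ => Finset.mul_sum _ _ _]
    exact F2d
  have F3d : (∑ J ∈ Finset.univ.erase I, ∑ R, (z J - z I)⁻¹ * (z J - w R)⁻¹) + (∑ R, ∑ J ∈ Finset.univ.erase I, (w R - z I)⁻¹ * (w R - z J)⁻¹) = -((∑ K ∈ Finset.univ.erase I, (z K - z I)⁻¹) * (∑ R, (w R - z I)⁻¹)) :=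
    my_sym_mixed (Finset.univ.erase I) Finset.univ
      (fun J R => (z J - z I)⁻¹ * (z J - w R)⁻¹)
      (fun R J => (w R - z I)⁻¹ * (w R - z J)⁻¹)
      (fun K => (z K - z I)⁻¹) (fun R => (w R - z I)⁻¹)
      (fun J hJ R _ => my_triple_id (z I) (z J) (w R) (hwz R J).ne'
        (hzz J I (Finset.ne_of_mem_erase hJ)) (hwz R I).ne)
  have F3 : (∑ J ∈ Finset.univ.erase I, (z J - z I)⁻¹ * ∑ R, (z J - w R)⁻¹) + (∑ R, (w R - z I)⁻¹ * ∑ J ∈ Finset.univ.erase I, (w R - z J)⁻¹) = -((∑ K ∈ Finset.univ.erase I, (z K - z I)⁻¹) * (∑ R, (w R - z I)⁻¹)) := by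
    rw [show (∑ J ∈ Finset.univ.erase I, (z J - z I)⁻¹ * ∑ R, (z J - w R)⁻¹) = (∑ J ∈ Finset.univ.erase I, ∑ R, (z J - z I)⁻¹ * (z J - w R)⁻¹) from Finset.sum_congr rfl fun J _ => Finset.mul_sum _ _ _,
      show (∑ R, (w R - z I)⁻¹ * ∑ J ∈ Finset.univ.erase I, (w R - z J)⁻¹) = (∑ R, ∑ J ∈ Finset.univ.erase I, (w R - z I)⁻¹ * (w R - z J)⁻¹) from Finset.sum_congr rfl fun R _ => Finset.mul_sum _ _ _]
    exact F3d
  have key : (2 / κ) * ((∑ K ∈ Finset.univ.erase I, (z K - z I)⁻¹) - 2 * (∑ R, (w R - z I)⁻¹)) ^ 2 + (-(∑ K ∈ Finset.univ.erase I, ((z K - z I)⁻¹) ^ 2) + 2 * (∑ R, ((w R - z I)⁻¹) ^ 2))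
      + ((4 / κ) * (∑ K ∈ Finset.univ.erase I, ((z K - z I)⁻¹) ^ 2) + (4 / κ) * (∑ J ∈ Finset.univ.erase I, (z J - z I)⁻¹ * ∑ K ∈ (Finset.univ.erase I).erase J, (z J - z K)⁻¹) - (8 / κ) * (∑ J ∈ Finset.univ.erase I, (z J - z I)⁻¹ * ∑ R, (z J - w R)⁻¹) + (1 - 6 / κ) * (∑ K ∈ Finset.univ.erase I, ((z K - z I)⁻¹) ^ 2))
      + ((16 / κ) * (∑ R, (w R - z I)⁻¹ * ∑ S ∈ Finset.univ.erase R, (w R - w S)⁻¹) - (8 / κ) * (∑ R, ((w R - z I)⁻¹) ^ 2) - (8 / κ) * (∑ R, (w R - z I)⁻¹ * ∑ J ∈ Finset.univ.erase I, (w R - z J)⁻¹) - 2 * (∑ R, ((w R - z I)⁻¹) ^ 2)) = 0 := by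
    linear_combination (2 / κ) * F1 + (8 / κ) * F2 - (8 / κ) * F3
  have G1 : κ / 2 * deriv (deriv fun t : ℝ => multSLEh κ (Function.update z I t) w) (z I)
        + (∑ J ∈ Finset.univ.erase I,
            (2 / (z J - z I) * deriv (fun t : ℝ => multSLEh κ (Function.update z J t) w) (z J)
              + ((κ - 6) / κ) / (z J - z I) ^ 2 * multSLEh κ z w))
        + (∑ R, (2 / (w R - z I) * deriv (fun t : ℝ => multSLEh κ z (Function.update w R t)) (w R)
              - 2 / (w R - z I) ^ 2 * multSLEh κ z w)) = 0 := by
    rw [hDD, hY, hZ]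
    linear_combination cX + (multSLEh κ z w) * key
  refine ⟨G1, ?_⟩
  -- second form: rewrite the screening sum as a total derivative
  have hZ2 : (∑ R, (2 / (w R - z I) * deriv (fun t : ℝ => multSLEh κ z (Function.update w R t)) (w R)
          - 2 / (w R - z I) ^ 2 * multSLEh κ z w))
      = 2 * ∑ R, deriv (fun t : ℝ => multSLEh κ z (Function.update w R t) / (t - z I)) (w R) := by
    rw [Finset.mul_sum]
    refine Finset.sum_congr rfl fun R _ => ?_
    have hnum := wUpdateDeriv κ z w R (w R)
      (fun S hS => sub_pos.mp (hw S R hS))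
      (fun S hS => sub_pos.mp (hw R S hS))
      (fun i => hwz R i)
    rw [Function.update_eq_self] at hnum
    have hden : HasDerivAt (fun t : ℝ => t - z I) 1 (w R) := (hasDerivAt_id _).sub_const _
    have hx : w R - z I ≠ 0 := sub_ne_zero.mpr (hwz R I).ne
    have hd2 : deriv (fun t : ℝ => multSLEh κ z (Function.update w R t) / (t - z I)) (w R)
        = ((multSLEh κ z w * ((8 / κ) * ∑ S ∈ Finset.univ.erase R, (w R - w S)⁻¹
              - (4 / κ) * ∑ i, (w R - z i)⁻¹)) * (w R - z I)
            - multSLEh κ z (Function.update w R (w R)) * 1) / (w R - z I) ^ 2 :=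
      (hnum.div hden hx).deriv
    rw [Function.update_eq_self] at hd2
    rw [hCd R, hd2]
    field_simp
  linear_combination G1 - hZ2
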